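/- arXiv:1803.06481 — 4 statements merged into one kernel-verified Lean document; each statement's English description precedes it below -/
import Mathlib

section
/- If π ∈ ℤ[√2] is a prime element with 1 < π < 1 + √2, then |π̄| > 1. -/
/-- The real embedding of `ℤ[√2]`. -/
noncomputable def emb (z : Zsqrtd 2) : ℝ := z.re + z.im * Real.sqrt 2

/-- The Galois conjugate embedding `a + b√2 ↦ a - b√2`. -/
noncomputable def embConj (z : Zsqrtd 2) : ℝ := z.re - z.im * Real.sqrt 2

/-! If `|π̄| ≤ 1`, then `2 · re π = π + π̄` lies strictly between `0` and `4`, so `re π = 1` and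
`π = 1 + b√2`; but `1 < π < 1 + √2` would then force `0 < b < 1`. -/

lemma emb_add_embConj (z : Zsqrtd 2) : emb z + embConj z = 2 * z.re := by
  unfold emb embConj; ring

lemma emb_of_re_eq_one {z : Zsqrtd 2} (h : z.re = 1) : emb z = 1 + z.im * Real.sqrt 2 := by
  simp [emb, h]

lemma re_eq_one_of_abs_embConj_le_one {z : Zsqrtd 2} (h1 : 1 < emb z) (h3 : emb z < 3)
    (hy : |embConj z| ≤ 1) : z.re = 1 := by
  have hsum := emb_add_embConj z
  obtain ⟨hy₁, hy₂⟩ := abs_le.mp hy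
  have hpos : (0 : ℝ) < z.re := by linarith
  have hlt : (z.re : ℝ) < 2 := by linarith
  norm_cast at hpos hlt
  omega

lemma intCast_mul_notMem_Ioo (b : ℤ) {r : ℝ} (hr : 0 < r) : (b : ℝ) * r ∉ Set.Ioo 0 r := by
  rintro ⟨hpos, hlt⟩
  have hb_pos : (0 : ℝ) < b := (mul_pos_iff_of_pos_right hr).mp hpos
  have hb_lt : (b : ℝ) < 1 := lt_of_mul_lt_mul_right (by linarith) hr.le
  norm_cast at hb_pos hb_lt
  omega

theorem conj_of_prime_in_fundamental_interval_general (π : Zsqrtd 2)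
    (h1 : 1 < emb π) (h2 : emb π < 1 + Real.sqrt 2) : 1 < |embConj π| := by
  by_contra! hy
  have hre := re_eq_one_of_abs_embConj_le_one h1 (by linarith [Real.sqrt_two_lt_three_halves]) hy
  rw [emb_of_re_eq_one hre] at h1 h2
  exact intCast_mul_notMem_Ioo π.im (Real.sqrt_pos.2 two_pos) ⟨by linarith, by linarith⟩

theorem conj_of_prime_in_fundamental_interval (π : Zsqrtd 2) (hπ : Prime π)
    (h1 : 1 < emb π) (h2 : emb π < 1 + Real.sqrt 2) : 1 < |embConj π| :=
  conj_of_prime_in_fundamental_interval_general π h1 h2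
end

section
/- Every prime element of ℤ[√2] is associated to exactly one prime π satisfying 1 < π < 1 + √2. -/
noncomputable def embHom : Zsqrtd 2 →+* ℝ :=
  Zsqrtd.lift ⟨√2, by simp⟩

def fundamentalUnit : (Zsqrtd 2)ˣ where
  val := ⟨1, 1⟩
  inv := ⟨-1, 1⟩
  val_inv := by ext <;> simp [Zsqrtd.re_mul, Zsqrtd.im_mul]
  inv_val := by ext <;> simp [Zsqrtd.re_mul, Zsqrtd.im_mul]

lemma emb_eq_embHom (z : Zsqrtd 2) : emb z = embHom z := rfl

lemma emb_mul (z w : Zsqrtd 2) : emb (z * w) = emb z * emb w := map_mul embHom z w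

lemma emb_neg (z : Zsqrtd 2) : emb (-z) = -emb z := map_neg embHom z

lemma emb_injective : Function.Injective emb :=
  show Function.Injective embHom from
    Zsqrtd.lift_injective _ fun n h => Int.prime_two.not_isSquare ⟨n, h⟩

lemma emb_eq_one_iff {z : Zsqrtd 2} : emb z = 1 ↔ z = 1 := by
  rw [← map_one embHom, ← emb_eq_embHom, emb_injective.eq_iff]

lemma emb_mul_emb_star (z : Zsqrtd 2) : emb z * emb (star z) = z.norm := by
  rw [emb_eq_embHom, emb_eq_embHom, ← map_mul, ← Zsqrtd.norm_eq_mul_conj, map_intCast]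

lemma emb_units_zpow (u : (Zsqrtd 2)ˣ) (k : ℤ) : emb ↑(u ^ k) = emb ↑u ^ k := by
  have h := congrArg Units.val (map_zpow (Units.map embHom.toMonoidHom) u k)
  rwa [Units.coe_map, Units.val_zpow_eq_zpow_val, Units.coe_map] at h

lemma emb_fundamentalUnit : emb ↑fundamentalUnit = 1 + √2 := by
  simp [emb, fundamentalUnit]

lemma one_add_sqrt_two_le_emb_of_isUnit {u : Zsqrtd 2} (hu : IsUnit u) (h : 1 < emb u) :
    1 + √2 ≤ emb u := by
  have hnorm : |emb u * emb (star u)| = 1 := by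
    rw [emb_mul_emb_star]
    rcases Int.isUnit_iff.mp ((Zsqrtd.isUnit_iff_norm_isUnit u).mp hu) with hn | hn <;> simp [hn]
  have hstar : |emb (star u)| < 1 := by
    rw [abs_mul, abs_of_pos (by linarith)] at hnorm
    nlinarith [abs_nonneg (emb (star u))]
  obtain ⟨hstar_lower, hstar_upper⟩ := abs_lt.mp hstar
  have hre : (1 : ℝ) ≤ u.re := by
    have h2re : (2 * u.re : ℝ) = emb u + emb (star u) := by simp [emb]; ring
    have : 0 < u.re := by exact_mod_cast (show (0 : ℝ) < u.re by linarith)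
    exact_mod_cast this
  have him : (1 : ℝ) ≤ u.im := by
    have h2im : (2 * u.im * √2 : ℝ) = emb u - emb (star u) := by simp [emb]; ring
    have : 0 < u.im := by exact_mod_cast (show (0 : ℝ) < u.im by nlinarith [Real.sqrt_nonneg 2])
    exact_mod_cast this
  calc 1 + √2 ≤ u.re + u.im * √2 := by nlinarith [Real.sqrt_nonneg 2]
    _ = emb u := rfl

lemma eq_one_of_isUnit_of_emb_mem_Ico {u : Zsqrtd 2} (hu : IsUnit u)
    (h : emb u ∈ Set.Ico 1 (1 + √2)) : u = 1 := by
  refine emb_eq_one_iff.mp (h.1.eq_of_not_lt fun hlt => ?_).symm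
  exact (one_add_sqrt_two_le_emb_of_isUnit hu hlt).not_gt h.2

lemma eq_of_associated_of_emb_mem_Ioo {q r : Zsqrtd 2} (hq : emb q ∈ Set.Ioo 1 (1 + √2))
    (hr : emb r ∈ Set.Ioo 1 (1 + √2)) (h : Associated q r) : q = r := by
  wlog hqr : emb q ≤ emb r generalizing q r
  · exact (this hr hq h.symm (le_of_not_ge hqr)).symm
  obtain ⟨u, rfl⟩ := h
  rw [emb_mul] at hr hqr
  have hq_pos : 0 < emb q := by linarith [hq.1]
  have hu_one : 1 ≤ emb ↑u := (le_mul_iff_one_le_right hq_pos).mp hqr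
  have hu_lt : emb ↑u < 1 + √2 := by nlinarith [hq.1, hr.2]
  rw [eq_one_of_isUnit_of_emb_mem_Ico u.isUnit ⟨hu_one, hu_lt⟩, mul_one]

lemma exists_associated_emb_mem_Ico {z : Zsqrtd 2} (hz : z ≠ 0) :
    ∃ q, Associated z q ∧ emb q ∈ Set.Ico 1 (1 + √2) := by
  obtain ⟨w, hzw, hw⟩ : ∃ w, Associated z w ∧ 0 < emb w := by
    have hz' : emb z ≠ 0 := fun h => hz (emb_injective (h.trans (map_zero embHom).symm))
    rcases hz'.lt_or_gt with h | h
    · exact ⟨-z, ⟨-1, by simp⟩, by rw [emb_neg]; linarith⟩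
    · exact ⟨z, .refl z, h⟩
  obtain ⟨n, hn_le, hn_lt⟩ := exists_mem_Ico_zpow hw (by simp : (1 : ℝ) < 1 + √2)
  have hε_pos : (0 : ℝ) < (1 + √2) ^ n := zpow_pos (by positivity) n
  refine ⟨w * ↑(fundamentalUnit ^ (-n)), hzw.trans ⟨_, rfl⟩, ?_, ?_⟩ <;>
    rw [emb_mul, emb_units_zpow, emb_fundamentalUnit, zpow_neg]
  · exact (le_mul_inv_iff₀ hε_pos).mpr (by rwa [one_mul])
  · rw [mul_inv_lt_iff₀ hε_pos, mul_comm, ← zpow_add_one₀ (by positivity)]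
    exact hn_lt

theorem prime_has_unique_associate_in_fundamental_interval (p : Zsqrtd 2) (hp : Prime p) :
    ∃! q : Zsqrtd 2, Prime q ∧ 1 < emb q ∧ emb q < 1 + Real.sqrt 2 ∧ Associated p q := by
  obtain ⟨q, hpq, hq_ge, hq_lt⟩ := exists_associated_emb_mem_Ico hp.ne_zero
  have hq : Prime q := hpq.prime hp
  have hq_gt : 1 < emb q :=
    hq_ge.lt_of_ne fun h => hq.not_isUnit (emb_eq_one_iff.mp h.symm ▸ isUnit_one)
  refine ⟨q, ⟨hq, hq_gt, hq_lt, hpq⟩, fun r ⟨_, hr_gt, hr_lt, hpr⟩ => ?_⟩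
  exact (eq_of_associated_of_emb_mem_Ioo ⟨hq_gt, hq_lt⟩ ⟨hr_gt, hr_lt⟩ (hpq.symm.trans hpr)).symm
end

section
/- If c ∈ ℤ[√2] satisfies |N(c)| = 2, where N(c) = c·c̄ is the field norm, then c is associated to √2. -/
/-!
Since `N c = re² - 2 im²` is even, `2 ∣ re c`, hence `√2 ∣ c`: indeed `√2 (x + y√2) = 2y + x√2`.
The cofactor then has norm `N c / N √2 = ±1` and is a unit.
-/

namespace Zsqrtd

variable {d : ℤ}

theorem sqrtd_dvd_of_dvd_re {c : ℤ√d} (h : d ∣ c.re) : sqrtd ∣ c := by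
  obtain ⟨k, hk⟩ := h
  exact ⟨⟨c.im, k⟩, by rw [muld_val, ← hk]⟩

theorem dvd_re_of_prime_dvd_norm {p : ℤ} (hp : Prime p) {c : ℤ√p} (h : p ∣ c.norm) :
    p ∣ c.re := by
  have hsq : p ∣ c.re * c.re := by
    have hre : c.re * c.re = c.norm + p * (c.im * c.im) := by rw [norm_def]; ring
    exact hre ▸ dvd_add h (dvd_mul_right p _)
  exact (hp.dvd_or_dvd hsq).elim id id

theorem associated_of_dvd_of_natAbs_norm_eq {a c : ℤ√d} (ha : a.norm ≠ 0) (hdvd : a ∣ c)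
    (h : c.norm.natAbs = a.norm.natAbs) : Associated a c := by
  obtain ⟨q, rfl⟩ := hdvd
  have hq : q.norm.natAbs = 1 := by
    rw [norm_mul, Int.natAbs_mul] at h
    exact (Nat.mul_eq_left (Int.natAbs_ne_zero.mpr ha)).mp h
  exact associated_mul_unit_right a q (norm_eq_one_iff.mp hq)

end Zsqrtd

theorem norm_two_associated_sqrt_two (c : Zsqrtd 2) (h : |Zsqrtd.norm c| = 2) :
    Associated c ⟨0, 1⟩ := by
  have hnorm_sqrtd : (Zsqrtd.sqrtd : ℤ√2).norm = -2 := rfl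
  have hnorm : c.norm.natAbs = 2 := by rw [← Int.natCast_inj, ← Int.abs_eq_natAbs, h]; rfl
  have hre : 2 ∣ c.re :=
    Zsqrtd.dvd_re_of_prime_dvd_norm Int.prime_two ((dvd_abs _ _).mp (by rw [h]))
  exact (Zsqrtd.associated_of_dvd_of_natAbs_norm_eq (by rw [hnorm_sqrtd]; decide)
    (Zsqrtd.sqrtd_dvd_of_dvd_re hre) (by rw [hnorm, hnorm_sqrtd]; rfl)).symm
end

section
/- Let 𝒫 ⊂ ℝ^d be locally finite and C ⊂ ℝ_{>1} a set such that for each x ∈ 𝒫 \ 𝒫̂ there exists c ∈ C with x/c ∈ 𝒫. Then for R > 0 and bounded D ⊂ ℝ^d: #(𝒫̂ ∩ RD) = ∑ over finite subsets F ⊂ C of (−1)^{#F} · #((𝒫_* ∩ ⋂_{c∈F} c𝒫_*) ∩ RD), where the sum has only finitely many nonzero terms. -/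
/-! For `x ∈ 𝒫_*` let `S(x) = {c ∈ C | x ∈ c𝒫_*}`. It is finite, since `c ↦ x / c` maps it
injectively into the finite set `𝒫 ∩ B(0, ‖x‖)`. The `F`-th term counts the points `x` of
`𝒫_* ∩ RD` with `F ⊆ S(x)`, so exchanging the two finite sums gives
`∑ₓ ∑_{F ⊆ S(x)} (-1)^{#F}`, which counts the `x` with `S(x) = ∅`; by the hypothesis on `C`
these are exactly the visible points `𝒫̂ ∩ RD`. -/

open Pointwise Function

section InclusionExclusion

open scoped Classical

variable {α β : Type*} {C : Set β}

lemma support_neg_one_pow_card_subset_powerset {s : Set β} (hs : s.Finite) :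
    (support fun F : {F : Finset β // ↑F ⊆ C} =>
      if ↑F.1 ⊆ s then (-1 : ℤ) ^ F.1.card else 0) ⊆
      ↑(hs.toFinset.powerset.subtype fun F => ↑F ⊆ C) := by
  intro F hF
  rw [Finset.mem_coe, Finset.mem_subtype, Finset.mem_powerset, hs.subset_toFinset]
  by_contra h
  exact hF (if_neg h)

lemma finsum_neg_one_pow_card_of_subset {s : Set β} (hs : s.Finite) (hsC : s ⊆ C) :
    ∑ᶠ F : {F : Finset β // ↑F ⊆ C}, (if ↑F.1 ⊆ s then (-1 : ℤ) ^ F.1.card else 0) =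
      if s = ∅ then 1 else 0 := by

  rw [finsum_eq_sum_of_support_subset _ (support_neg_one_pow_card_subset_powerset hs),
    Finset.sum_subtype_eq_sum_filter (fun F : Finset β => if ↑F ⊆ s then (-1 : ℤ) ^ F.card else 0),
    Finset.filter_true_of_mem, Finset.sum_ite_of_true,
    Finset.sum_powerset_neg_one_pow_card]
  · simp only [hs.toFinset_eq_empty]
  · exact fun F hF => hs.subset_toFinset.mp (Finset.mem_powerset.mp hF)
  · exact fun F hF => (hs.subset_toFinset.mp (Finset.mem_powerset.mp hF)).trans hsC

lemma ncard_sep_eq_sum_ite {A : Set α} (hA : A.Finite) (p : α → Prop) :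
    ({x ∈ A | p x}.ncard : ℤ) = ∑ x ∈ hA.toFinset, if p x then 1 else 0 := by
  have : {x ∈ A | p x} = ↑(hA.toFinset.filter p) := by ext; simp
  rw [this, Set.ncard_coe_finset, Finset.sum_boole]

theorem finsum_neg_one_pow_card_mul_ncard {A : Set α} (hA : A.Finite) (S : α → Set β)
    (hS : ∀ x ∈ A, (S x).Finite) (hSC : ∀ x ∈ A, S x ⊆ C) :
    HasFiniteSupport (fun F : {F : Finset β // ↑F ⊆ C} =>
        (-1 : ℤ) ^ F.1.card * {x ∈ A | ↑F.1 ⊆ S x}.ncard) ∧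
    ∑ᶠ F : {F : Finset β // ↑F ⊆ C}, (-1 : ℤ) ^ F.1.card * {x ∈ A | ↑F.1 ⊆ S x}.ncard =
      {x ∈ A | S x = ∅}.ncard := by
  have hterm : (fun F : {F : Finset β // ↑F ⊆ C} =>
      (-1 : ℤ) ^ F.1.card * {x ∈ A | ↑F.1 ⊆ S x}.ncard) =
      fun F => ∑ x ∈ hA.toFinset, if ↑F.1 ⊆ S x then (-1 : ℤ) ^ F.1.card else 0 := by
    ext F
    simp only [ncard_sep_eq_sum_ite hA, Finset.mul_sum, mul_ite, mul_one, mul_zero]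
  have hfin : ∀ x ∈ hA.toFinset, HasFiniteSupport fun F : {F : Finset β // ↑F ⊆ C} =>
      if ↑F.1 ⊆ S x then (-1 : ℤ) ^ F.1.card else 0 := fun x hx =>
    Finset.finite_toSet _ |>.subset
      (support_neg_one_pow_card_subset_powerset (hS x (hA.mem_toFinset.mp hx)))
  rw [hterm, finsum_sum_comm _ _ hfin, ncard_sep_eq_sum_ite hA]
  refine ⟨(hA.toFinset.finite_toSet.biUnion hfin).subset (Finset.support_sum _ _), ?_⟩
  refine Finset.sum_congr rfl fun x hx => ?_
  rw [hA.mem_toFinset] at hx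
  exact finsum_neg_one_pow_card_of_subset (hS x hx) (hSC x hx)

end InclusionExclusion

section Visibility

variable {E : Type*} [NormedAddCommGroup E] [NormedSpace ℝ E]

def visiblePoints (P : Set E) : Set E := {x ∈ P | ∀ t : ℝ, 0 < t → t < 1 → t • x ∉ P}

def occurringScales (P : Set E) (C : Set ℝ) (x : E) : Set ℝ := {c ∈ C | x ∈ c • (P \ {0})}

lemma zero_notMem_visiblePoints (P : Set E) : (0 : E) ∉ visiblePoints P :=
  fun h => h.2 (1 / 2) (by norm_num) (by norm_num) (by rw [smul_zero]; exact h.1)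

lemma mem_occurringScales {P : Set E} {C : Set ℝ} (hC : (0 : ℝ) ∉ C) {x : E} {c : ℝ} :
    c ∈ occurringScales P C x ↔ c ∈ C ∧ c⁻¹ • x ∈ P ∧ x ≠ 0 := by
  refine and_congr_right fun hcC => ?_
  have hc0 : c ≠ 0 := ne_of_mem_of_not_mem hcC hC
  rw [Set.mem_smul_set_iff_inv_smul_mem₀ hc0, Set.mem_sdiff, Set.mem_singleton_iff,
    smul_eq_zero, inv_eq_zero, or_iff_right hc0]

lemma finite_setOf_one_lt_inv_smul_mem {P : Set E}
    (hP : ∀ B : Set E, Bornology.IsBounded B → (P ∩ B).Finite) {x : E} (hx : x ≠ 0) :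
    {c : ℝ | 1 < c ∧ c⁻¹ • x ∈ P}.Finite := by
  have hinj : Injective fun c : ℝ => c⁻¹ • x := (smul_left_injective ℝ hx).comp inv_injective
  refine .of_finite_image ((hP _ (Metric.isBounded_closedBall (x := 0) (r := ‖x‖))).subset ?_)
    hinj.injOn
  rintro _ ⟨c, ⟨hc, hcx⟩, rfl⟩
  refine ⟨hcx, ?_⟩
  rw [mem_closedBall_zero_iff, norm_smul, norm_inv, Real.norm_of_nonneg (by linarith)]
  exact mul_le_of_le_one_left (norm_nonneg x) (inv_le_one_of_one_le₀ hc.le)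

variable {P : Set E} {C : Set ℝ}

lemma finite_occurringScales (hP : ∀ B : Set E, Bornology.IsBounded B → (P ∩ B).Finite)
    (hC : C ⊆ Set.Ioi 1) {x : E} (hx : x ≠ 0) : (occurringScales P C x).Finite := by
  refine (finite_setOf_one_lt_inv_smul_mem hP hx).subset fun c hc => ?_
  obtain ⟨hcC, hcx, -⟩ := (mem_occurringScales fun h => absurd (hC h) (by norm_num)).mp hc
  exact ⟨hC hcC, hcx⟩

lemma visiblePoints_eq (hC : C ⊆ Set.Ioi 1)
    (hocc : ∀ x ∈ P \ visiblePoints P, ∃ c ∈ C, c⁻¹ • x ∈ P) :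
    visiblePoints P = {x ∈ P \ {0} | occurringScales P C x = ∅} := by
  have hC0 : (0 : ℝ) ∉ C := fun h => absurd (hC h) (by norm_num)
  ext x
  simp only [Set.mem_ofPred_eq, Set.eq_empty_iff_forall_notMem, mem_occurringScales hC0]
  constructor
  · intro hx
    have hx0 : x ≠ 0 := fun h => zero_notMem_visiblePoints P (h ▸ hx)
    refine ⟨⟨hx.1, hx0⟩, fun c ⟨hcC, hcx, _⟩ => hx.2 c⁻¹ ?_ ?_ hcx⟩
    · exact inv_pos.mpr (zero_lt_one.trans (hC hcC))
    · exact inv_lt_one_of_one_lt₀ (hC hcC)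
  · rintro ⟨⟨hxP, hx0⟩, hS⟩
    by_contra hvis
    obtain ⟨c, hcC, hcx⟩ := hocc x ⟨hxP, hvis⟩
    exact hS c ⟨hcC, hcx, hx0⟩

end Visibility

theorem visible_count_inclusion_exclusion_general (d : ℕ) (P : Set (Fin d → ℝ)) (C : Set ℝ)
    (hP : ∀ B : Set (Fin d → ℝ), Bornology.IsBounded B → (P ∩ B).Finite)
    (hC : C ⊆ Set.Ioi (1 : ℝ))
    (hocc : ∀ x ∈ P \ {x ∈ P | ∀ t : ℝ, 0 < t → t < 1 → t • x ∉ P},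
      ∃ c ∈ C, c⁻¹ • x ∈ P)
    (R : ℝ) (D : Set (Fin d → ℝ)) (hD : Bornology.IsBounded D) :
    (Function.support (fun F : {F : Finset ℝ // ↑F ⊆ C} =>
        ((-1 : ℤ) ^ F.1.card *
          (((P \ {0}) ∩ ⋂ c ∈ F.1, c • (P \ {0})) ∩ R • D).ncard))).Finite ∧
    (({x ∈ P | ∀ t : ℝ, 0 < t → t < 1 → t • x ∉ P} ∩ R • D).ncard : ℤ) =
      ∑ᶠ F : {F : Finset ℝ // ↑F ⊆ C},
        (-1 : ℤ) ^ F.1.card *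
          (((P \ {0}) ∩ ⋂ c ∈ F.1, c • (P \ {0})) ∩ R • D).ncard := by
  set A := P \ {0} ∩ R • D
  have hA : A.Finite := (hP _ (hD.smul₀ R)).subset (Set.inter_subset_inter_left _ Set.sdiff_subset)
  have hterm : ∀ F : {F : Finset ℝ // ↑F ⊆ C},
      (P \ {0} ∩ ⋂ c ∈ F.1, c • (P \ {0})) ∩ R • D = {x ∈ A | ↑F.1 ⊆ occurringScales P C x} := by
    rintro ⟨F, hFC⟩
    ext x
    simp only [A, occurringScales, Set.mem_inter_iff, Set.mem_iInter, Set.mem_ofPred_eq]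
    exact ⟨fun ⟨⟨hx, hxF⟩, hxD⟩ => ⟨⟨hx, hxD⟩, fun c hc => ⟨hFC hc, hxF c hc⟩⟩,
      fun ⟨⟨hx, hxD⟩, hxF⟩ => ⟨⟨hx, fun c hc => (hxF hc).2⟩, hxD⟩⟩
  have hvis : visiblePoints P ∩ R • D = {x ∈ A | occurringScales P C x = ∅} := by
    rw [visiblePoints_eq hC hocc]
    ext x
    simp only [A, Set.mem_inter_iff, Set.mem_ofPred_eq]
    tauto
  obtain ⟨hsupp, hsum⟩ := finsum_neg_one_pow_card_mul_ncard hA (occurringScales P C)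
    (fun x hx => finite_occurringScales hP hC hx.1.2) (fun x _ => Set.sep_subset _ _)
  simp only [hterm]
  refine ⟨hsupp, ?_⟩
  change ((visiblePoints P ∩ R • D).ncard : ℤ) = _
  rw [hvis, hsum]

theorem visible_count_inclusion_exclusion (d : ℕ) (P : Set (Fin d → ℝ)) (C : Set ℝ)
    (hP : ∀ B : Set (Fin d → ℝ), Bornology.IsBounded B → (P ∩ B).Finite)
    (hC : C ⊆ Set.Ioi (1 : ℝ))
    (hocc : ∀ x ∈ P \ {x ∈ P | ∀ t : ℝ, 0 < t → t < 1 → t • x ∉ P},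
      ∃ c ∈ C, c⁻¹ • x ∈ P)
    (R : ℝ) (hR : 0 < R) (D : Set (Fin d → ℝ)) (hD : Bornology.IsBounded D) :
    (Function.support (fun F : {F : Finset ℝ // ↑F ⊆ C} =>
        ((-1 : ℤ) ^ F.1.card *
          (((P \ {0}) ∩ ⋂ c ∈ F.1, c • (P \ {0})) ∩ R • D).ncard))).Finite ∧
    (({x ∈ P | ∀ t : ℝ, 0 < t → t < 1 → t • x ∉ P} ∩ R • D).ncard : ℤ) =
      ∑ᶠ F : {F : Finset ℝ // ↑F ⊆ C},
        (-1 : ℤ) ^ F.1.card *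
          (((P \ {0}) ∩ ⋂ c ∈ F.1, c • (P \ {0})) ∩ R • D).ncard :=
  visible_count_inclusion_exclusion_general d P C hP hC hocc R D hD
end
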